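/- arXiv:1604.08837 — 2 statements merged into one kernel-verified Lean document; each statement's English description precedes it below -/
import Mathlib

section
/- For every integer n ≥ 2, the number of hooks of size n that are chiral, i.e., the number of pairs (a,b) with a, b ≥ 0, a+b+1 = n and h(a,b) = (a+1,1^b) chiral, equals 2^{ν(n−2)}, where ν(m) is the number of ones in the binary expansion of m (and ν(0) = 0). -/
namespace ChiralPaper

/-- The set of cells of the Young diagram of a partition `p` of `n`:
the 0-indexed cell `(i, j)` (row `i`, column `j`) belongs to the diagram iff
`i` is less than the number of parts of `p` that are at least `j + 1`. -/
def cells {n : ℕ} (p : Nat.Partition n) : Finset (ℕ × ℕ) :=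
  (Finset.range n ×ˢ Finset.range n).filter fun c =>
    c.1 < (p.parts.filter fun a => c.2 + 1 ≤ a).card

/-- `T` is a standard Young tableau of shape `p` (encoded as a function on `ℕ × ℕ`,
vanishing off the diagram): it maps the cells bijectively to `{1, …, n}` and is
strictly increasing along rows and down columns. -/
def IsSYT {n : ℕ} (p : Nat.Partition n) (T : ℕ × ℕ → ℕ) : Prop :=
  Set.BijOn T ↑(cells p) (Set.Icc 1 n) ∧
  (∀ x, x ∉ cells p → T x = 0) ∧
  ∀ c ∈ cells p, ∀ d ∈ cells p, c.1 ≤ d.1 → c.2 ≤ d.2 → c ≠ d → T c < T d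

/-- `f_λ`: the number of standard Young tableaux of shape `p`. -/
noncomputable def fSYT {n : ℕ} (p : Nat.Partition n) : ℕ :=
  Nat.card {T : ℕ × ℕ → ℕ // IsSYT p T}

/-- `g_λ`: the number of standard Young tableaux of shape `p` in which the entry `2`
lies in the first column, i.e. in the (0-indexed) cell `(1, 0)`. -/
noncomputable def gSYT {n : ℕ} (p : Nat.Partition n) : ℕ :=
  Nat.card {T : ℕ × ℕ → ℕ // IsSYT p T ∧ T (1, 0) = 2}

/-- A partition is chiral if `g_λ` is odd. -/
def IsChiral {n : ℕ} (p : Nat.Partition n) : Prop := Odd (gSYT p)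

/-- `C(λ) = ∑_{(i,j) ∈ λ} (j - i)`, the sum of contents of the cells. -/
def contentSum {n : ℕ} (p : Nat.Partition n) : ℤ :=
  ∑ c ∈ cells p, ((c.2 : ℤ) - (c.1 : ℤ))

/-- `b(n)`: the number of chiral partitions of `n`. -/
noncomputable def chiralCount (n : ℕ) : ℕ := Nat.card {p : Nat.Partition n // IsChiral p}

/-- `a(n)`: the number of partitions of `n` with `f_λ` odd. -/
noncomputable def oddCount (n : ℕ) : ℕ := Nat.card {p : Nat.Partition n // Odd (fSYT p)}

/-- `b_v(n)`: the number of chiral partitions of `n` with `v₂(f_λ) = v`. -/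
noncomputable def chiralCountV (v n : ℕ) : ℕ :=
  Nat.card {p : Nat.Partition n // IsChiral p ∧ padicValNat 2 (fSYT p) = v}

/-- A partition is self-conjugate iff its Young diagram is symmetric under transposition. -/
def IsSelfConjugate {n : ℕ} (p : Nat.Partition n) : Prop :=
  ∀ i j : ℕ, (i, j) ∈ cells p ↔ (j, i) ∈ cells p

/-- The hook partition `h(a, b) = (a + 1, 1^b)` of `a + b + 1`. -/
def hook (a b : ℕ) : Nat.Partition (a + b + 1) where
  parts := (a + 1) ::ₘ Multiset.replicate b 1
  parts_pos := by
    intro i hi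
    rw [Multiset.mem_cons] at hi
    rcases hi with h | h
    · omega
    · have := Multiset.eq_of_mem_replicate h
      omega
  parts_sum := by
    simp [Multiset.sum_replicate]
    omega

/-- `ν(m)`: the number of ones in the binary expansion of `m`. -/
def nu (m : ℕ) : ℕ := (Nat.digits 2 m).count 1

/-- `bin(m)`: the set of exponents in the binary expansion of `m`. -/
def binSet (m : ℕ) : Finset ℕ := (Finset.range (m + 1)).filter fun k => m.testBit k

/-- The family of parts `f i`, `i ∈ s`, is *neat*: the binary-digit sets of the parts
are pairwise disjoint and their union is the binary-digit set of the total sum. -/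
def Neat {ι : Type*} [DecidableEq ι] (s : Finset ι) (f : ι → ℕ) : Prop :=
  (∀ i ∈ s, ∀ j ∈ s, i ≠ j → Disjoint (binSet (f i)) (binSet (f j))) ∧
  s.biUnion (fun i => binSet (f i)) = binSet (∑ i ∈ s, f i)

/-- `f : ℕ → ℕ` encodes an ordered set partition of `{1, …, n}` of shape `lam`:
`f` vanishes off `{1, …, n}`, takes values in `{1, …, l}` there, and the fiber of
`(i : ℕ) + 1` has cardinality `lam i`.  (The `i`-th block is the fiber of `i + 1`.) -/
def IsOSP (n l : ℕ) (lam : Fin l → ℕ) (f : ℕ → ℕ) : Prop :=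
  (∀ x, x ∉ Finset.Icc 1 n → f x = 0) ∧
  (∀ x ∈ Finset.Icc 1 n, f x ∈ Finset.Icc 1 l) ∧
  ∀ i : Fin l, ((Finset.Icc 1 n).filter fun x => f x = (i : ℕ) + 1).card = lam i

/-- The number of ordered set partitions of shape `lam` moved by the transposition `(1 2)`. -/
noncomputable def movedCount (n l : ℕ) (lam : Fin l → ℕ) : ℕ :=
  Nat.card {f : ℕ → ℕ // IsOSP n l lam f ∧ f ∘ (Equiv.swap 1 2) ≠ f}

/-- The permutation representation `C[X_λ]` is chiral: the transposition `(1 2)` induces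
an odd permutation of `X_λ`, i.e. the number of moved points is `≡ 2 (mod 4)`. -/
def PermChiral (n l : ℕ) (lam : Fin l → ℕ) : Prop := movedCount n l lam % 4 = 2

/-- Chirality of `C[X_λ]` for a partition given as a multiset. -/
def PermChiralP {n : ℕ} (p : Nat.Partition n) : Prop :=
  PermChiral n p.parts.toList.length (fun i => p.parts.toList.get i)

/-- The `k`-th Bell number: the number of set partitions of a `k`-element set. -/
noncomputable def bell (k : ℕ) : ℕ := Nat.card (Finpartition (Finset.univ : Finset (Fin k)))

/-!
An SYT of the hook `h(a, b + 1)` with `2` in the first column has `1, 2` at the top of that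
column and is determined by the set of entries in the rest of its first row, which can be any
`a`-subset of `{3, …, a + b + 2}`; so `g_{h(a, b + 1)} = C(a + b, a)`, while `g_{h(a, 0)} = 0`.
By Lucas' theorem at `p = 2`, `C(m, a)` is odd iff every binary digit of `a` is a digit of `m`,
so the chiral hooks of size `m + 2` correspond to the `2 ^ ν(m)` submasks of `m`.
-/

open Finset

lemma odd_choose_mod_two_iff {m a : ℕ} :
    Odd ((m % 2).choose (a % 2)) ↔ (a % 2 = 1 → m % 2 = 1) := by
  rcases Nat.mod_two_eq_zero_or_one m with hm | hm <;>
    rcases Nat.mod_two_eq_zero_or_one a with ha | ha <;> simp [hm, ha]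

theorem odd_choose_iff_testBit_imp {m a : ℕ} :
    Odd (m.choose a) ↔ ∀ i, a.testBit i → m.testBit i := by
  induction m using Nat.strong_induction_on generalizing a with
  | _ m ih =>
  rcases m.eq_zero_or_pos with rfl | hm
  · rcases a.eq_zero_or_pos with rfl | ha
    · simp
    · simp only [Nat.choose_eq_zero_of_lt ha, Nat.not_odd_zero, Nat.zero_testBit, false_iff]
      intro h
      exact ha.ne' (Nat.zero_of_testBit_eq_false fun i => by simpa using mt (h i))
  · rw [Nat.odd_iff, Choose.choose_modEq_choose_mod_mul_choose_div_nat (p := 2), ← Nat.odd_iff,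
      Nat.odd_mul, odd_choose_mod_two_iff, ih (m / 2) (by omega),
      ← Nat.and_forall_add_one (p := fun i => a.testBit i → m.testBit i)]
    simp only [Nat.testBit_zero, decide_eq_true_eq, Nat.testBit_div_two]

lemma nu_eq_length_bitIndices (m : ℕ) : nu m = m.bitIndices.length := by
  induction m using Nat.evenOddRec with
  | h0 => simp [nu]
  | h_even k ih =>
    rcases k.eq_zero_or_pos with rfl | hk
    · simp [nu]
    rw [nu, Nat.digits_def' (by norm_num) (by omega), Nat.bitIndices_two_mul]
    simpa [nu] using ih
  | h_odd k ih =>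
    rw [nu, Nat.digits_def' (by norm_num) (by omega), Nat.bitIndices_two_mul_add_one]
    simpa [nu, Nat.mul_add_div, List.count_cons] using ih

theorem card_odd_choose (m : ℕ) : Nat.card {a // Odd (m.choose a)} = 2 ^ nu m := by
  let e : {a // Odd (m.choose a)} ≃ m.bitIndices.toFinset.powerset :=
    { toFun a := ⟨a.1.bitIndices.toFinset, mem_powerset.2 fun i hi => by
        simpa using odd_choose_iff_testBit_imp.1 a.2 i (by simpa using hi)⟩
      invFun s := ⟨∑ i ∈ s.1, 2 ^ i, odd_choose_iff_testBit_imp.2 fun i hi => by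
        rw [← Nat.mem_bitIndices, ← List.mem_toFinset, toFinset_bitIndices_sum_two_pow] at hi
        simpa using mem_powerset.1 s.2 hi⟩
      left_inv a := Subtype.ext (sum_toFinset_bitIndices_two_pow a)
      right_inv s := Subtype.ext (toFinset_bitIndices_sum_two_pow s) }
  rw [Nat.card_congr e, Nat.card_eq_finsetCard, card_powerset, List.card_toFinset,
    Nat.bitIndices_nodup.dedup, nu_eq_length_bitIndices]

section Enumeration

variable {s : Finset ℕ} {k l x : ℕ}

lemma nth_mem_finset (hk : k < #s) : Nat.nth (· ∈ s) k ∈ s :=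
  Nat.nth_mem_of_lt_card s.finite_toSet (by simpa using hk)

lemma nth_lt_nth_finset (hkl : k < l) (hl : l < #s) :
    Nat.nth (· ∈ s) k < Nat.nth (· ∈ s) l :=
  Nat.nth_lt_nth_of_lt_card s.finite_toSet hkl (by simpa using hl)

lemma nth_finset_of_card_le (hk : #s ≤ k) : Nat.nth (· ∈ s) k = 0 :=
  Nat.nth_of_card_le s.finite_toSet (by simpa using hk)

lemma eq_of_nth_finset_eq (hk : k < #s) (hl : l < #s)
    (h : Nat.nth (· ∈ s) k = Nat.nth (· ∈ s) l) : k = l :=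
  Nat.nth_injOn s.finite_toSet (by simpa using hk) (by simpa using hl) h

lemma exists_lt_card_nth_finset_eq (hx : x ∈ s) : ∃ k < #s, Nat.nth (· ∈ s) k = x := by
  simpa using Nat.exists_lt_card_finite_nth_eq s.finite_toSet hx

lemma nth_finset_eq_of_strictMonoOn {f : ℕ → ℕ} (hmono : StrictMonoOn f (Set.Iio #s))
    (hmaps : ∀ k < #s, f k ∈ s) (hk : k < #s) : Nat.nth (· ∈ s) k = f k := by
  have hs : (Set.ofPred (· ∈ s)).Finite := s.finite_toSet
  have hcard : #hs.toFinset = #s := by simp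
  rw [Nat.nth_eq_orderEmbOfFin hs (hcard ▸ hk), ← orderEmbOfFin_unique rfl
    (f := fun i => f i) (fun i => by simpa using hmaps i (hcard ▸ i.2))
    fun i j hij => hmono (hcard ▸ i.2) (hcard ▸ j.2) hij]

end Enumeration

lemma mem_cells_hook {a b i j : ℕ} :
    (i, j) ∈ cells (hook a b) ↔ i = 0 ∧ j ≤ a ∨ j = 0 ∧ i ≤ b := by
  have hleg : ((Multiset.replicate b 1).filter (j + 1 ≤ ·)).card = if j = 0 then b else 0 := by
    rw [← Multiset.coe_replicate, Multiset.filter_coe, Multiset.coe_card, List.filter_replicate]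
    split_ifs <;> simp_all
  simp only [cells, hook, mem_filter, mem_product, mem_range, Multiset.filter_cons,
    Multiset.card_add, hleg]
  split_ifs <;> simp <;> omega

lemma cells_hook_succ_cases {a b : ℕ} {c : ℕ × ℕ} (hc : c ∈ cells (hook a (b + 1))) :
    c = (0, 0) ∨ c = (1, 0) ∨ (∃ i < b, c = (i + 2, 0)) ∨ ∃ j < a, c = (0, j + 1) := by
  obtain ⟨_ | _ | i, _ | j⟩ := c <;> simp only [mem_cells_hook] at hc <;> simp <;> omega

/-- Past the ends of `S` and `C`, `Nat.nth` returns `0`, so this vanishes off the diagram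
of `hook #S (#C + 1)`. -/
noncomputable def hookTableau (S C : Finset ℕ) : ℕ × ℕ → ℕ
  | (0, 0) => 1
  | (1, 0) => 2
  | (i + 2, 0) => Nat.nth (· ∈ C) i
  | (0, j + 1) => Nat.nth (· ∈ S) j
  | _ => 0

lemma hookTableau_injOn {S C : Finset ℕ} (hSC : Disjoint S C) (h3 : ∀ x ∈ S ∪ C, 3 ≤ x) :
    Set.InjOn (hookTableau S C) (cells (hook #S (#C + 1))) := by
  have hS3 : ∀ j < #S, 3 ≤ Nat.nth (· ∈ S) j := fun j hj =>
    h3 _ (mem_union_left C (nth_mem_finset hj))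
  have hC3 : ∀ i < #C, 3 ≤ Nat.nth (· ∈ C) i := fun i hi =>
    h3 _ (mem_union_right S (nth_mem_finset hi))
  intro c hc d hd hcd
  rcases cells_hook_succ_cases hc with rfl | rfl | ⟨i, hi, rfl⟩ | ⟨j, hj, rfl⟩ <;>
  rcases cells_hook_succ_cases hd with rfl | rfl | ⟨i', hi', rfl⟩ | ⟨j', hj', rfl⟩ <;>
    simp only [hookTableau] at hcd
  all_goals first
    | rfl
    | omega
    | (have := hS3 _ ‹_›; omega)
    | (have := hC3 _ ‹_›; omega)
    | rw [eq_of_nth_finset_eq hj hj' hcd]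
    | rw [eq_of_nth_finset_eq hi hi' hcd]
    | exact (disjoint_left.1 hSC (nth_mem_finset hj) (hcd ▸ nth_mem_finset hi')).elim
    | exact (disjoint_left.1 hSC (nth_mem_finset hj') (hcd ▸ nth_mem_finset hi)).elim

lemma hookTableau_lt_of_le {S C : Finset ℕ} (h3 : ∀ x ∈ S ∪ C, 3 ≤ x) {c d : ℕ × ℕ}
    (hc : c ∈ cells (hook #S (#C + 1))) (hd : d ∈ cells (hook #S (#C + 1)))
    (h1 : c.1 ≤ d.1) (h2 : c.2 ≤ d.2) (hne : c ≠ d) : hookTableau S C c < hookTableau S C d := by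
  have hS3 : ∀ j < #S, 3 ≤ Nat.nth (· ∈ S) j := fun j hj =>
    h3 _ (mem_union_left C (nth_mem_finset hj))
  have hC3 : ∀ i < #C, 3 ≤ Nat.nth (· ∈ C) i := fun i hi =>
    h3 _ (mem_union_right S (nth_mem_finset hi))
  rcases cells_hook_succ_cases hc with rfl | rfl | ⟨i, hi, rfl⟩ | ⟨j, hj, rfl⟩ <;>
  rcases cells_hook_succ_cases hd with rfl | rfl | ⟨i', hi', rfl⟩ | ⟨j', hj', rfl⟩ <;>
    simp only [hookTableau, ne_eq, Prod.mk.injEq, and_true, true_and, not_true_eq_false]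
      at h1 h2 hne ⊢
  all_goals first
    | omega
    | (have := hS3 _ ‹_›; omega)
    | (have := hC3 _ ‹_›; omega)
    | exact nth_lt_nth_finset (by omega) hj'
    | exact nth_lt_nth_finset (by omega) hi'

theorem isSYT_hookTableau {a b : ℕ} {S C : Finset ℕ} (hS : #S = a) (hC : #C = b)
    (hSC : Disjoint S C) (hunion : S ∪ C = Icc 3 (a + b + 2)) :
    IsSYT (hook a (b + 1)) (hookTableau S C) := by
  subst hS hC
  have hIcc : ∀ x ∈ S ∪ C, 3 ≤ x ∧ x ≤ #S + #C + 2 := fun x hx => mem_Icc.1 (hunion ▸ hx)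
  refine ⟨⟨?_, hookTableau_injOn hSC fun x hx => (hIcc x hx).1, ?_⟩, ?_,
    fun c hc d hd => hookTableau_lt_of_le (fun x hx => (hIcc x hx).1) hc hd⟩
  · intro c hc
    rcases cells_hook_succ_cases hc with rfl | rfl | ⟨i, hi, rfl⟩ | ⟨j, hj, rfl⟩ <;>
      simp only [hookTableau, Set.mem_Icc]
    · omega
    · omega
    · have := hIcc _ (mem_union_right S (nth_mem_finset hi)); omega
    · have := hIcc _ (mem_union_left C (nth_mem_finset hj)); omega
  · intro v hv
    rw [Set.mem_Icc] at hv
    rcases (by omega : v = 1 ∨ v = 2 ∨ 3 ≤ v) with rfl | rfl | hv3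
    · exact ⟨(0, 0), mem_cells_hook.2 (by omega), rfl⟩
    · exact ⟨(1, 0), mem_cells_hook.2 (by omega), rfl⟩
    rcases mem_union.1 (hunion ▸ mem_Icc.2 ⟨hv3, hv.2⟩) with hvS | hvC
    · obtain ⟨j, hj, rfl⟩ := exists_lt_card_nth_finset_eq hvS
      exact ⟨(0, j + 1), mem_cells_hook.2 (by omega), rfl⟩
    · obtain ⟨i, hi, rfl⟩ := exists_lt_card_nth_finset_eq hvC
      exact ⟨(i + 2, 0), mem_cells_hook.2 (by omega), rfl⟩
  · rintro ⟨_ | _ | i, _ | j⟩ hc <;> simp [mem_cells_hook] at hc <;> simp only [hookTableau]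
    all_goals exact nth_finset_of_card_le (by omega)

theorem IsSYT.apply_zero_zero {n : ℕ} {p : Nat.Partition n} {T : ℕ × ℕ → ℕ} (hT : IsSYT p T)
    (h00 : (0, 0) ∈ cells p) : T (0, 0) = 1 := by
  have h00' := Set.mem_Icc.1 (hT.1.mapsTo h00)
  obtain ⟨c, hc, hc1⟩ := hT.1.surjOn (Set.mem_Icc.2 ⟨le_rfl, h00'.1.trans h00'.2⟩)
  by_cases hc0 : c = (0, 0)
  · rwa [hc0] at hc1
  · have := hT.2.2 _ h00 c hc (Nat.zero_le _) (Nat.zero_le _) (Ne.symm hc0)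
    omega

def armEntries (a : ℕ) (T : ℕ × ℕ → ℕ) : Finset ℕ := (range a).image fun j => T (0, j + 1)

section HookTableaux

variable {a b : ℕ}

lemma card_Icc_three_sdiff {S : Finset ℕ} (hsub : S ⊆ Icc 3 (a + b + 2)) (hS : #S = a) :
    #(Icc 3 (a + b + 2) \ S) = b := by
  rw [card_sdiff_of_subset hsub, Nat.card_Icc, hS]
  omega

lemma isSYT_hookTableau_sdiff {S : Finset ℕ} (hsub : S ⊆ Icc 3 (a + b + 2)) (hS : #S = a) :
    IsSYT (hook a (b + 1)) (hookTableau S (Icc 3 (a + b + 2) \ S)) :=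
  isSYT_hookTableau hS (card_Icc_three_sdiff hsub hS) disjoint_sdiff (union_sdiff_of_subset hsub)

lemma armEntries_hookTableau {S C : Finset ℕ} (hS : #S = a) :
    armEntries a (hookTableau S C) = S := by
  ext x
  simp only [armEntries, hookTableau, mem_image, mem_range]
  constructor
  · rintro ⟨j, hj, rfl⟩
    exact nth_mem_finset (hS ▸ hj)
  · intro hx
    obtain ⟨j, hj, rfl⟩ := exists_lt_card_nth_finset_eq hx
    exact ⟨j, hS ▸ hj, rfl⟩

variable {T : ℕ × ℕ → ℕ}

lemma card_armEntries (hT : IsSYT (hook a b) T) : #(armEntries a T) = a := by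
  rw [armEntries, card_image_of_injOn, card_range]
  intro j hj j' hj' h
  simp only [coe_range, Set.mem_Iio] at hj hj'
  simpa using hT.1.injOn (mem_cells_hook.2 (by omega)) (mem_cells_hook.2 (by omega)) h

lemma armEntries_subset (hT : IsSYT (hook a (b + 1)) T) (h2 : T (1, 0) = 2) :
    armEntries a T ⊆ Icc 3 (a + b + 2) := by
  intro x hx
  obtain ⟨j, hj, rfl⟩ := mem_image.1 hx
  have hcell : (0, j + 1) ∈ cells (hook a (b + 1)) := mem_cells_hook.2 (by simp at hj; omega)
  have h10 : (1, 0) ∈ cells (hook a (b + 1)) := mem_cells_hook.2 (by omega)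
  have hbound := Set.mem_Icc.1 (hT.1.mapsTo hcell)
  have hgt : T (0, 0) < T (0, j + 1) := hT.2.2 _ (mem_cells_hook.2 (by omega)) _ hcell
    le_rfl (Nat.zero_le _) (by simp)
  have hne : T (0, j + 1) ≠ T (1, 0) := fun h => by simpa using hT.1.injOn hcell h10 h
  rw [hT.apply_zero_zero (mem_cells_hook.2 (by omega))] at hgt
  rw [mem_Icc]
  omega

lemma leg_mem_sdiff_armEntries (hT : IsSYT (hook a (b + 1)) T) (h2 : T (1, 0) = 2) {i : ℕ}
    (hi : i < b) : T (i + 2, 0) ∈ Icc 3 (a + b + 2) \ armEntries a T := by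
  have hcell : (i + 2, 0) ∈ cells (hook a (b + 1)) := mem_cells_hook.2 (by omega)
  have hbound := Set.mem_Icc.1 (hT.1.mapsTo hcell)
  have hgt : T (1, 0) < T (i + 2, 0) :=
    hT.2.2 _ (mem_cells_hook.2 (by omega)) _ hcell (by simp) le_rfl (by simp)
  refine mem_sdiff.2 ⟨mem_Icc.2 (by omega), fun hx => ?_⟩
  obtain ⟨j, hj, hji⟩ := mem_image.1 hx
  simpa using hT.1.injOn (mem_cells_hook.2 (by simp at hj; omega)) hcell hji

lemma hookTableau_armEntries (hT : IsSYT (hook a (b + 1)) T) (h2 : T (1, 0) = 2) :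
    hookTableau (armEntries a T) (Icc 3 (a + b + 2) \ armEntries a T) = T := by
  have hsub := armEntries_subset hT h2
  have hS := card_armEntries hT
  have hC := card_Icc_three_sdiff hsub hS
  funext c
  by_cases hc : c ∈ cells (hook a (b + 1))
  swap
  · rw [(isSYT_hookTableau_sdiff hsub hS).2.1 c hc, hT.2.1 c hc]
  rcases cells_hook_succ_cases hc with rfl | rfl | ⟨i, hi, rfl⟩ | ⟨j, hj, rfl⟩
  · exact (hT.apply_zero_zero (mem_cells_hook.2 (by omega))).symm
  · exact h2.symm
  · have hleg : ∀ k < b, (k + 2, 0) ∈ cells (hook a (b + 1)) := fun k hk =>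
      mem_cells_hook.2 (by omega)
    exact nth_finset_eq_of_strictMonoOn (f := fun k => T (k + 2, 0))
      (fun k hk l hl hkl => hT.2.2 _ (hleg k (hC ▸ hk)) _ (hleg l (hC ▸ hl)) (by simp; omega)
        le_rfl (by simp; omega)) (fun k hk => leg_mem_sdiff_armEntries hT h2 (by omega))
      (by omega)
  · refine nth_finset_eq_of_strictMonoOn (f := fun k => T (0, k + 1))
      (fun k hk l hl hkl => hT.2.2 _ (mem_cells_hook.2 (by simp at hk; omega)) _
        (mem_cells_hook.2 (by simp at hl; omega)) le_rfl (by simp; omega) (by simp; omega))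
      (fun k hk => mem_image_of_mem _ (mem_range.2 (by omega))) (by omega)

theorem gSYT_hook_succ (a b : ℕ) : gSYT (hook a (b + 1)) = (a + b).choose a := by
  let e : {T // IsSYT (hook a (b + 1)) T ∧ T (1, 0) = 2} ≃ powersetCard a (Icc 3 (a + b + 2)) :=
    { toFun T := ⟨armEntries a T.1, mem_powersetCard.2
        ⟨armEntries_subset T.2.1 T.2.2, card_armEntries T.2.1⟩⟩
      invFun S := ⟨hookTableau S (Icc 3 (a + b + 2) \ S), isSYT_hookTableau_sdiff
        (mem_powersetCard.1 S.2).1 (mem_powersetCard.1 S.2).2, rfl⟩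
      left_inv T := Subtype.ext (hookTableau_armEntries T.2.1 T.2.2)
      right_inv S := Subtype.ext (armEntries_hookTableau (C := Icc 3 (a + b + 2) \ S)
        (mem_powersetCard.1 S.2).2) }
  rw [gSYT, Nat.card_congr e, Nat.card_eq_finsetCard, card_powersetCard, Nat.card_Icc]
  rfl

end HookTableaux

lemma gSYT_hook_zero (a : ℕ) : gSYT (hook a 0) = 0 := by
  refine Nat.card_eq_zero.2 (.inl ⟨fun ⟨T, hT, h2⟩ => ?_⟩)
  simp [hT.2.1 (1, 0) (by simp [mem_cells_hook])] at h2

lemma isChiral_hook_iff {a b m : ℕ} (h : a + b + 1 = m + 2) :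
    IsChiral (hook a b) ↔ Odd (m.choose a) := by
  cases b with
  | zero => simp [IsChiral, gSYT_hook_zero, Nat.choose_eq_zero_of_lt (by omega : m < a)]
  | succ b =>
    obtain rfl : m = a + b := by omega
    rw [IsChiral, gSYT_hook_succ]

theorem chiral_hook_count (n : ℕ) (hn : 2 ≤ n) :
    Nat.card {ab : ℕ × ℕ // ab.1 + ab.2 + 1 = n ∧ IsChiral (hook ab.1 ab.2)} =
      2 ^ nu (n - 2) := by
  obtain ⟨m, rfl⟩ := Nat.exists_eq_add_of_le' hn
  rw [Nat.add_sub_cancel, ← card_odd_choose]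
  refine Nat.card_congr
    { toFun ab := ⟨ab.1.1, (isChiral_hook_iff ab.2.1).1 ab.2.2⟩
      invFun a := ⟨(a, m + 1 - a), ?_⟩
      left_inv ab := ?_
      right_inv a := rfl }
  · have ha : a.1 ≤ m := not_lt.1 (Nat.choose_eq_zero_iff.not.1 a.2.pos.ne')
    have hsum : a.1 + (m + 1 - a.1) + 1 = m + 2 := by omega
    exact ⟨hsum, (isChiral_hook_iff hsum).2 a.2⟩
  · obtain ⟨⟨a, b⟩, hab, -⟩ := ab
    ext
    · rfl
    · simp only
      omega

end ChiralPaper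
end

section
/- Let n ≥ 2 and let λ be a partition of n. If the number of odd parts of λ is zero or at least four, then C[X_λ] is not chiral. Consequently, if n is even and C[X_λ] is chiral then λ has exactly two odd parts, and if n is odd and C[X_λ] is chiral then λ has exactly one or exactly three odd parts. -/
namespace ChiralPaper

/-!
A point of `X_λ` moved by `(1 2)` puts `1` and `2` into different blocks `a ≠ b`; the remaining
points then form an ordered set partition of `{3, …, n}` whose block sizes `μ` are those of `λ`
with one removed from blocks `a` and `b`. The number `N(a, b)` of these is symmetric in `a, b`,
so the number of moved points is `2 ∑_{a < b} N(a, b)`, and `(1 2)` is even as soon as every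
`N(a, b)` is. If `λ` has no odd part, `μ` is odd at `a` and `b`; if it has at least four, `μ` is
odd at two further blocks. And when two blocks `c ≠ d` have odd sizes, merging `d` into `c` is a
map whose fibres have `binom(μ_c + μ_d, μ_c)` elements, an even number. The statements for even
and odd `n` then follow from `n ≡ #{odd parts} (mod 2)`.
-/

open Finset Function

section Colorings

variable {α β : Type*} [DecidableEq β]

def colorings (S : Finset α) (h : α → β) (μ : β → ℕ) : Set (α → β) :=
  {f | (∀ x ∉ S, f x = h x) ∧ ∀ v, #{x ∈ S | f x = v} = μ v}

theorem colorings_finite (S : Finset α) (h : α → β) (μ : β → ℕ) :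
    (colorings S h μ).Finite := by
  classical
  rcases (colorings S h μ).eq_empty_or_nonempty with hempty | ⟨f₀, hf₀⟩
  · simp [hempty]
  have hval : ∀ f ∈ colorings S h μ, ∀ x ∈ S, f x ∈ S.image f₀ := by
    intro f hf x hx
    have : #{y ∈ S | f₀ y = f x} ≠ 0 := by
      rw [hf₀.2, ← hf.2]
      exact card_ne_zero_of_mem (mem_filter.2 ⟨hx, rfl⟩)
    obtain ⟨y, hy⟩ := card_ne_zero.1 this
    exact mem_image.2 ⟨y, (mem_filter.1 hy).1, (mem_filter.1 hy).2⟩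
  refine (Set.finite_range fun g : S → S.image f₀ => fun x =>
    if hx : x ∈ S then (g ⟨x, hx⟩ : β) else h x).subset fun f hf => ?_
  refine ⟨fun x => ⟨f x, hval f hf x x.2⟩, funext fun x => ?_⟩
  by_cases hx : x ∈ S
  · simp [hx]
  · simp [hx, hf.1 x hx]

def recolor (c d : β) (f : α → β) : α → β := fun x => if f x = d then c else f x

variable [DecidableEq α] {S : Finset α} {h : α → β} {μ : β → ℕ}

theorem card_filter_recolor_eq {c d : β} (hcd : c ≠ d) {f : α → β}
    (hf : f ∈ colorings S h μ) :
    #{x ∈ S | recolor c d f x = c} = μ c + μ d := by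
  have hdisj : Disjoint {x ∈ S | f x = c} {x ∈ S | f x = d} :=
    disjoint_filter.2 fun x _ (hc : f x = c) hd => hcd (hc.symm.trans hd)
  have : {x ∈ S | recolor c d f x = c} = {x ∈ S | f x = c} ∪ {x ∈ S | f x = d} := by
    ext x
    simp only [recolor, mem_filter, mem_union]
    grind
  rw [this, card_union_of_disjoint hdisj, hf.2, hf.2]

theorem ncard_recolor_fiber {c d : β} (hcd : c ≠ d) {f₀ : α → β}
    (hf₀ : f₀ ∈ colorings S h μ) :
    {f ∈ colorings S h μ | recolor c d f = recolor c d f₀}.ncard =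
      (μ c + μ d).choose (μ c) := by
  set E := {x ∈ S | recolor c d f₀ x = c}
  have hE : #E = μ c + μ d := card_filter_recolor_eq hcd hf₀
  -- A member of the fibre is recovered from its `c`-class, which can be any `μ c`-subset of `E`.
  let split (T : Finset α) : α → β := fun x =>
    if x ∈ T then c else if x ∈ E then d else f₀ x
  have hsplit_c : ∀ T ⊆ E, {x ∈ S | split T x = c} = T := by
    intro T hTE
    ext x
    simp only [split, mem_filter]
    grind [recolor]
  rw [← hE, ← card_powersetCard, ← Set.ncard_coe_finset]
  refine Set.BijOn.ncard_eq (f := fun f => {x ∈ S | f x = c})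
    (Set.InvOn.bijOn (f' := split) ⟨?_, ?_⟩ ?_ ?_)
  · intro f ⟨hf, hfg⟩
    funext x
    have hx := congrFun hfg x
    simp only [split, E, recolor, mem_filter] at hx ⊢
    by_cases hxS : x ∈ S
    · grind
    · grind [hf.1 x hxS, hf₀.1 x hxS]
  · intro T hT
    exact hsplit_c T (mem_powersetCard.1 hT).1
  · intro f ⟨hf, hfg⟩
    refine mem_powersetCard.2 ⟨fun x hx => ?_, hf.2 c⟩
    have := congrFun hfg x
    simp only [E, recolor, mem_filter] at hx this ⊢
    grind
  · intro T hT
    obtain ⟨hTE, hTc⟩ := mem_powersetCard.1 hT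
    refine ⟨⟨fun x hx => ?_, fun v => ?_⟩, funext fun x => ?_⟩
    · have : x ∉ E := fun hxE => hx (mem_filter.1 hxE).1
      have hxT : x ∉ T := fun hxT => this (hTE hxT)
      simp only [split, this, hxT, if_false, hf₀.1 x hx]
    · rcases eq_or_ne v c with rfl | hvc
      · rw [hsplit_c T hTE, hTc]
      rcases eq_or_ne v d with rfl | hvd
      · have : {x ∈ S | split T x = v} = E \ T := by
          ext x; simp only [split, E, mem_filter, mem_sdiff]; grind [recolor]
        rw [this, card_sdiff_of_subset hTE, hE, hTc, Nat.add_sub_cancel_left]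
      · rw [← hf₀.2 v]
        congr 1
        refine filter_congr fun x hx => ?_
        simp only [split, E]
        grind [recolor]
    · simp only [split, E] at hTE ⊢
      grind [recolor]

theorem even_choose_of_even_of_odd {m k : ℕ} (hm : Even m) (hk : Odd k) : Even (m.choose k) := by
  obtain ⟨j, rfl⟩ : ∃ j, k = j + 1 := ⟨k - 1, by grind⟩
  cases m with
  | zero => simp
  | succ n =>
    have key : Even (n.succ.choose (j + 1) * (j + 1)) := by
      rw [← Nat.add_one_mul_choose_eq]; exact hm.mul_right _
    exact (Nat.even_mul.1 key).resolve_right (Nat.not_even_iff_odd.2 hk)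

theorem even_ncard_colorings {c d : β} (hcd : c ≠ d) (hc : Odd (μ c)) (hd : Odd (μ d)) :
    Even (colorings S h μ).ncard := by
  classical
  have hfin := colorings_finite S h μ
  rw [Set.ncard_eq_toFinset_card _ hfin, card_eq_sum_card_fiberwise
    (t := hfin.toFinset.image (recolor c d)) fun f hf => mem_image_of_mem _ hf]
  refine even_sum _ fun g hg => ?_
  obtain ⟨f₀, hf₀, rfl⟩ := mem_image.1 hg
  rw [Set.Finite.mem_toFinset] at hf₀
  have hfiber : #{f ∈ hfin.toFinset | recolor c d f = recolor c d f₀} =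
      {f ∈ colorings S h μ | recolor c d f = recolor c d f₀}.ncard := by
    rw [← Set.ncard_coe_finset, coe_filter]
    simp only [Set.Finite.mem_toFinset]
  rw [hfiber, ncard_recolor_fiber hcd hf₀]
  exact even_choose_of_even_of_odd (hc.add_odd hd) hc

theorem piecewise_mem_colorings {f : α → β} (hf : f ∈ colorings S h μ) (h' : α → β) :
    S.piecewise f h' ∈ colorings S h' μ := by
  refine ⟨fun x hx => piecewise_eq_of_notMem _ _ _ hx, fun v => ?_⟩
  rw [← hf.2 v]
  exact congrArg card (filter_congr fun x hx => by rw [piecewise_eq_of_mem _ _ _ hx])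

theorem piecewise_piecewise_of_mem_colorings {f : α → β} (hf : f ∈ colorings S h μ)
    (h' : α → β) : S.piecewise (S.piecewise f h') h = f := by
  funext x
  by_cases hx : x ∈ S
  · simp [hx]
  · simp [hx, hf.1 x hx]

theorem ncard_colorings_congr (h h' : α → β) :
    (colorings S h μ).ncard = (colorings S h' μ).ncard :=
  Set.BijOn.ncard_eq (f := fun f => S.piecewise f h') <|
    Set.InvOn.bijOn (f' := fun f => S.piecewise f h)
    ⟨fun _ hf => piecewise_piecewise_of_mem_colorings hf h',
      fun _ hf => piecewise_piecewise_of_mem_colorings hf h⟩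
    (fun _ hf => piecewise_mem_colorings hf h') (fun _ hf => piecewise_mem_colorings hf h)

theorem colorings_pin {i : α} (hi : i ∈ S) {a : β} (ha : μ a ≠ 0) :
    {f ∈ colorings S h μ | f i = a} =
      colorings (S.erase i) (update h i a) (update μ a (μ a - 1)) := by
  ext f
  constructor
  · rintro ⟨⟨hoff, hcount⟩, rfl⟩
    refine ⟨fun x hx => ?_, fun v => ?_⟩
    · rcases eq_or_ne x i with rfl | hxi
      · simp
      · rw [update_of_ne hxi, hoff x fun hxS => hx (mem_erase.2 ⟨hxi, hxS⟩)]
    · rw [filter_erase]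
      rcases eq_or_ne v (f i) with rfl | hv
      · rw [card_erase_of_mem (mem_filter.2 ⟨hi, rfl⟩ : i ∈ {x ∈ S | f x = f i}), hcount,
          update_self]
      · rw [erase_eq_of_notMem fun h => hv (mem_filter.1 h).2.symm, hcount, update_of_ne hv]
  · rintro ⟨hoff, hcount⟩
    have hfi : f i = a := by simpa using hoff i (notMem_erase i S)
    refine ⟨⟨fun x hx => ?_, fun v => ?_⟩, hfi⟩
    · have hxi : x ≠ i := fun h => hx (h ▸ hi)
      rw [hoff x fun h => hx (mem_of_mem_erase h), update_of_ne hxi]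
    · have := hcount v
      rw [filter_erase] at this
      rcases eq_or_ne v a with rfl | hv
      · have hmem : i ∈ {x ∈ S | f x = v} := mem_filter.2 ⟨hi, hfi⟩
        rw [update_self, card_erase_of_mem hmem] at this
        have := card_pos.2 ⟨i, hmem⟩
        omega
      · rwa [erase_eq_of_notMem fun h => hv ((mem_filter.1 h).2.symm.trans hfi),
          update_of_ne hv] at this

end Colorings

theorem comp_swap_eq_self_iff {α β : Type*} [DecidableEq α] {f : α → β} {a b : α} :
    f ∘ Equiv.swap a b = f ↔ f a = f b := by
  refine ⟨fun h => by simpa using (congrFun h a).symm, fun h => funext fun x => ?_⟩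
  simp only [comp_apply, Equiv.swap_apply_def]
  split_ifs with hxa hxb
  · rw [hxa, h]
  · rw [hxb, h]
  · rfl

theorem four_dvd_sum_offDiag {ι : Type*} [DecidableEq ι] (s : Finset ι) (f : ι × ι → ℕ)
    (hswap : ∀ p, f p.swap = f p) (heven : ∀ p ∈ s.offDiag, Even (f p)) :
    4 ∣ ∑ p ∈ s.offDiag, f p := by
  rw [← ZMod.natCast_eq_zero_iff, Nat.cast_sum]
  refine sum_involution (fun p _ => p.swap) (fun p hp => ?_) (fun p hp _ => ?_)
    (fun p hp => by grind) (fun p _ => p.swap_swap)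
  · obtain ⟨k, hk⟩ := heven p hp
    rw [hswap, ← Nat.cast_add, ZMod.natCast_eq_zero_iff]
    omega
  · obtain ⟨-, -, hne⟩ := mem_offDiag.1 hp
    exact fun h => hne (congrArg Prod.fst h).symm

section OrderedSetPartitions

variable {n l : ℕ} {lam : Fin l → ℕ}

def blockSize (lam : Fin l → ℕ) : ℕ → ℕ
  | 0 => 0
  | k + 1 => if h : k < l then lam ⟨k, h⟩ else 0

@[simp]
theorem blockSize_succ (i : Fin l) : blockSize lam (i + 1) = lam i := dif_pos i.2

theorem mem_Icc_of_blockSize_ne_zero {v : ℕ} (hv : blockSize lam v ≠ 0) : v ∈ Icc 1 l := by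
  cases v with
  | zero => exact absurd rfl hv
  | succ k =>
    by_cases hk : k < l
    · exact mem_Icc.2 ⟨k.succ_pos, hk⟩
    · exact absurd (dif_neg hk) hv

theorem isOSP_iff_mem_colorings {f : ℕ → ℕ} :
    IsOSP n l lam f ↔ f ∈ colorings (Icc 1 n) 0 (blockSize lam) := by
  constructor
  · rintro ⟨hoff, hval, hcount⟩
    refine ⟨hoff, fun v => ?_⟩
    by_cases hv : v ∈ Icc 1 l
    · obtain ⟨k, rfl⟩ : ∃ k, v = k + 1 := ⟨v - 1, by grind⟩
      have hk : k < l := by grind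
      simpa [blockSize, hk] using hcount ⟨k, hk⟩
    · rw [not_imp_comm.1 mem_Icc_of_blockSize_ne_zero hv, card_eq_zero, filter_eq_empty_iff]
      exact fun x hx hfx => hv (hfx ▸ hval x hx)
  · rintro ⟨hoff, hcount⟩
    refine ⟨hoff, fun x hx => mem_Icc_of_blockSize_ne_zero (lam := lam) ?_,
      fun i => by simpa using hcount (i + 1)⟩
    rw [← hcount]
    exact card_ne_zero_of_mem (mem_filter.2 ⟨hx, rfl⟩)

/-- The block sizes left once `1` is placed in block `p.1` and `2` in block `p.2`. -/
def residual (lam : Fin l → ℕ) (p : Fin l × Fin l) : ℕ → ℕ :=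
  update (update (blockSize lam) ((p.1 : ℕ) + 1) (lam p.1 - 1)) ((p.2 : ℕ) + 1) (lam p.2 - 1)

theorem residual_swap (p : Fin l × Fin l) : residual lam p.swap = residual lam p := by
  rcases eq_or_ne p.1 p.2 with h | h
  · rw [show p.swap = p from Prod.ext h.symm h]
  · exact update_comm (by simpa using Fin.val_ne_of_ne (Ne.symm h)) _ _ _

theorem setOf_isOSP_pin (hn : 2 ≤ n) (hpos : ∀ i, 0 < lam i) {p : Fin l × Fin l}
    (hp : p.1 ≠ p.2) :
    {f | IsOSP n l lam f ∧ f 1 = p.1 + 1 ∧ f 2 = p.2 + 1} =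
      colorings (((Icc 1 n).erase 1).erase 2)
        (update (update (0 : ℕ → ℕ) 1 ((p.1 : ℕ) + 1)) 2 ((p.2 : ℕ) + 1))
        (residual lam p) := by
  have hp' : (p.2 : ℕ) + 1 ≠ p.1 + 1 := by simpa using Fin.val_ne_of_ne (Ne.symm hp)
  have h1 : 1 ∈ Icc 1 n := mem_Icc.2 ⟨le_rfl, by omega⟩
  have h2 : 2 ∈ (Icc 1 n).erase 1 := mem_erase.2 ⟨by omega, mem_Icc.2 ⟨by omega, hn⟩⟩
  calc {f | IsOSP n l lam f ∧ f 1 = p.1 + 1 ∧ f 2 = p.2 + 1}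
      = {f ∈ {f ∈ colorings (Icc 1 n) 0 (blockSize lam) | f 1 = p.1 + 1} | f 2 = p.2 + 1} := by
        ext f; simp [isOSP_iff_mem_colorings, and_assoc]
    _ = _ := by
      rw [colorings_pin h1 (by simpa using (hpos p.1).ne'),
        colorings_pin h2 (by simpa [update_of_ne hp'] using (hpos p.2).ne')]
      simp [residual, update_of_ne hp']

theorem setOf_moved_eq_biUnion (hn : 2 ≤ n) :
    {f | IsOSP n l lam f ∧ f ∘ Equiv.swap 1 2 ≠ f} =
      ⋃ p ∈ (univ : Finset (Fin l)).offDiag,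
        {f | IsOSP n l lam f ∧ f 1 = p.1 + 1 ∧ f 2 = p.2 + 1} := by
  ext f
  simp only [Set.mem_ofPred_eq, Set.mem_iUnion, mem_offDiag, mem_univ, true_and, exists_prop,
    Ne, comp_swap_eq_self_iff]
  constructor
  · rintro ⟨hf, hne⟩
    have h1 := mem_Icc.1 (hf.2.1 1 (mem_Icc.2 ⟨le_rfl, by omega⟩))
    have h2 := mem_Icc.1 (hf.2.1 2 (mem_Icc.2 ⟨by omega, hn⟩))
    exact ⟨(⟨f 1 - 1, by omega⟩, ⟨f 2 - 1, by omega⟩), fun h => hne (by simp at h; omega),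
      hf, by simp; omega, by simp; omega⟩
  · rintro ⟨p, hp, hf, h1, h2⟩
    exact ⟨hf, fun h => hp (Fin.ext (by omega))⟩

theorem movedCount_eq_sum (hn : 2 ≤ n) (hpos : ∀ i, 0 < lam i) :
    movedCount n l lam = ∑ p ∈ (univ : Finset (Fin l)).offDiag,
      (colorings (((Icc 1 n).erase 1).erase 2) 0 (residual lam p)).ncard := by
  have hfin (p : Fin l × Fin l) :
      {f | IsOSP n l lam f ∧ f 1 = p.1 + 1 ∧ f 2 = p.2 + 1}.Finite :=
    (colorings_finite (Icc 1 n) 0 (blockSize lam)).subset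
      fun f hf => isOSP_iff_mem_colorings.1 hf.1
  rw [movedCount, ← Set.coe_ofPred, Nat.card_coe_set_eq, setOf_moved_eq_biUnion hn,
    ← set_biUnion_coe, Set.Finite.ncard_biUnion (finite_toSet _) (fun p _ => hfin p),
    finsum_mem_coe_finset]
  · refine sum_congr rfl fun p hp => ?_
    rw [setOf_isOSP_pin hn hpos (mem_offDiag.1 hp).2.2, ncard_colorings_congr]
  · intro p _ q _ hpq
    refine Set.disjoint_left.2 fun f hp hq => hpq (Prod.ext (Fin.ext ?_) (Fin.ext ?_)) <;>
      grind

theorem residual_succ_of_ne {p : Fin l × Fin l} {i : Fin l} (h₁ : i ≠ p.1) (h₂ : i ≠ p.2) :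
    residual lam p (i + 1) = lam i := by
  simp [residual, Fin.val_eq_val, h₁, h₂]

theorem exists_odd_residual (hpos : ∀ i, 0 < lam i) {p : Fin l × Fin l} (hp : p.1 ≠ p.2)
    (hodd : #{i | Odd (lam i)} = 0 ∨ 4 ≤ #{i | Odd (lam i)}) :
    ∃ c d, c ≠ d ∧ Odd (residual lam p c) ∧ Odd (residual lam p d) := by
  have hp' : (p.2 : ℕ) + 1 ≠ p.1 + 1 := by simpa using Fin.val_ne_of_ne (Ne.symm hp)
  rcases hodd with h0 | h4
  · have heven (i : Fin l) : Even (lam i) :=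
      Nat.not_odd_iff_even.1 (filter_eq_empty_iff.1 (card_eq_zero.1 h0) (mem_univ i))
    refine ⟨p.1 + 1, p.2 + 1, hp'.symm, ?_, ?_⟩
    · simp only [residual, update_of_ne hp'.symm, update_self]
      exact Nat.Even.sub_odd (hpos _) (heven _) odd_one
    · simp only [residual, update_self]
      exact Nat.Even.sub_odd (hpos _) (heven _) odd_one
  · have h2 : 1 < #((univ.filter fun i => Odd (lam i)) \ {p.1, p.2}) := by
      have := card_le_card_sdiff_add_card (s := univ.filter fun i => Odd (lam i))
        (t := {p.1, p.2})
      have := card_le_two (a := p.1) (b := p.2)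
      omega
    obtain ⟨i, hi, j, hj, hij⟩ := one_lt_card.1 h2
    simp only [mem_sdiff, mem_filter, mem_univ, true_and, mem_insert, mem_singleton, not_or]
      at hi hj
    refine ⟨i + 1, j + 1, by simpa using Fin.val_ne_of_ne hij, ?_, ?_⟩
    · simpa [residual_succ_of_ne hi.2.1 hi.2.2] using hi.1
    · simpa [residual_succ_of_ne hj.2.1 hj.2.2] using hj.1

theorem four_dvd_movedCount (hn : 2 ≤ n) (hpos : ∀ i, 0 < lam i)
    (hodd : #{i | Odd (lam i)} = 0 ∨ 4 ≤ #{i | Odd (lam i)}) : 4 ∣ movedCount n l lam := by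
  rw [movedCount_eq_sum hn hpos]
  refine four_dvd_sum_offDiag _ _ (fun p => by rw [residual_swap]) fun p hp => ?_
  obtain ⟨c, d, hcd, hc, hd⟩ := exists_odd_residual hpos (mem_offDiag.1 hp).2.2 hodd
  exact even_ncard_colorings hcd hc hd

end OrderedSetPartitions

theorem permChiral_odd_parts_general
    (n : ℕ) (hn : 2 ≤ n) (l : ℕ) (lam : Fin l → ℕ)
    (hpos : ∀ i, 0 < lam i) (hsum : ∑ i, lam i = n) :
    (((Finset.univ.filter fun i => Odd (lam i)).card = 0 ∨
        4 ≤ (Finset.univ.filter fun i => Odd (lam i)).card) →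
      ¬ PermChiral n l lam) ∧
    (Even n → PermChiral n l lam →
      (Finset.univ.filter fun i => Odd (lam i)).card = 2) ∧
    (Odd n → PermChiral n l lam →
      ((Finset.univ.filter fun i => Odd (lam i)).card = 1 ∨
        (Finset.univ.filter fun i => Odd (lam i)).card = 3)) := by
  have not_chiral :
      (#{i | Odd (lam i)} = 0 ∨ 4 ≤ #{i | Odd (lam i)}) → ¬PermChiral n l lam :=
    fun hodd hchiral => by
      have := four_dvd_movedCount hn hpos hodd
      unfold PermChiral at hchiral
      omega
  have hparity : Even n ↔ Even #{i | Odd (lam i)} := hsum ▸ even_sum_iff_even_card_odd lam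
  refine ⟨not_chiral, fun heven hchiral => ?_, fun hodd hchiral => ?_⟩
  · have := fun h => not_chiral h hchiral
    have := hparity.1 heven
    grind
  · have := fun h => not_chiral h hchiral
    have := mt hparity.2 (Nat.not_even_iff_odd.2 hodd)
    grind

theorem permChiral_odd_parts
    (n : ℕ) (hn : 2 ≤ n) (l : ℕ) (lam : Fin l → ℕ)
    (hpos : ∀ i, 0 < lam i) (hanti : Antitone lam) (hsum : ∑ i, lam i = n) :
    (((Finset.univ.filter fun i => Odd (lam i)).card = 0 ∨
        4 ≤ (Finset.univ.filter fun i => Odd (lam i)).card) →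
      ¬ PermChiral n l lam) ∧
    (Even n → PermChiral n l lam →
      (Finset.univ.filter fun i => Odd (lam i)).card = 2) ∧
    (Odd n → PermChiral n l lam →
      ((Finset.univ.filter fun i => Odd (lam i)).card = 1 ∨
        (Finset.univ.filter fun i => Odd (lam i)).card = 3)) :=
  permChiral_odd_parts_general n hn l lam hpos hsum

end ChiralPaper
end
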